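/- arXiv:2407.01612 — 2 statements merged into one kernel-verified Lean document; each statement's English description precedes it below -/
import Mathlib

section
/- Let G be a strongly connected bridgeless mixed multigraph, let r be a positive integer, and let u be a vertex of G with eccentricity at most r. Then for every vertex v ∈ N(u), there is a cycle of G of length at most 2r + 1 containing an edge between u and v. -/
open scoped Classical ENNReal

universe u

/-- A mixed multigraph: a type `E` of edges, an endpoint map (tail, head) and a
predicate recording which edges are directed. An undirected edge may be
traversed in both directions; a directed edge only from tail to head. -/
structure MixedMultigraph (V : Type u) : Type (u + 1) where
  E : Type u
  ends : E → V × V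
  directed : E → Prop

namespace MixedMultigraph

variable {V : Type u}

/-- Edge `e` may be traversed from `x` to `y`. -/
def Traverses (G : MixedMultigraph V) (e : G.E) (x y : V) : Prop :=
  G.ends e = (x, y) ∨ (¬ G.directed e ∧ G.ends e = (y, x))

/-- Walks in a mixed multigraph: consecutive vertices are joined by an
undirected edge or by a directed edge traversed in its direction. -/
inductive Walk (G : MixedMultigraph V) : V → V → Type u
  | nil (v : V) : Walk G v v
  | cons {x y z : V} (e : G.E) (h : G.Traverses e x y) (w : Walk G y z) : Walk G x z

namespace Walk

variable {G : MixedMultigraph V}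

/-- The number of edges of a walk. -/
def length : ∀ {x y : V}, G.Walk x y → ℕ
  | _, _, nil _ => 0
  | _, _, cons _ _ w => w.length + 1

/-- The list of edges of a walk. -/
def edges : ∀ {x y : V}, G.Walk x y → List G.E
  | _, _, nil _ => []
  | _, _, cons e _ w => e :: w.edges

/-- The list of vertices visited by a walk (both endpoints included). -/
def support : ∀ {x y : V}, G.Walk x y → List V
  | _, _, nil v => [v]
  | x, _, cons _ _ w => x :: w.support

end Walk

/-- The distance from `x` to `y`: the minimum number of edges of a walk from
`x` to `y` (`⊤` if there is none). -/
noncomputable def edist (G : MixedMultigraph V) (x y : V) : ℕ∞ :=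
  sInf {n : ℕ∞ | ∃ w : G.Walk x y, (w.length : ℕ∞) = n}

/-- The eccentricity of a vertex `u`. -/
noncomputable def ecc (G : MixedMultigraph V) (u : V) : ℕ∞ :=
  ⨆ v, max (G.edist u v) (G.edist v u)

/-- The radius of `G`. -/
noncomputable def radius (G : MixedMultigraph V) : ℕ∞ := ⨅ u, G.ecc u

/-- The diameter of `G`. -/
noncomputable def diam (G : MixedMultigraph V) : ℕ∞ := ⨆ u, G.ecc u

/-- `G` is strongly connected: every vertex can reach every other by a walk. -/
def StronglyConnected (G : MixedMultigraph V) : Prop :=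
  ∀ x y : V, Nonempty (G.Walk x y)

/-- The underlying undirected multigraph: forget all directions. -/
def symmetrize (G : MixedMultigraph V) : MixedMultigraph V :=
  ⟨G.E, G.ends, fun _ => False⟩

/-- Delete the edge `e`. -/
def deleteEdge (G : MixedMultigraph V) (e : G.E) : MixedMultigraph V :=
  ⟨{e' : G.E // e' ≠ e}, fun e' => G.ends e'.1, fun e' => G.directed e'.1⟩

/-- The underlying undirected multigraph of `G` is connected. -/
def Conn (G : MixedMultigraph V) : Prop := G.symmetrize.StronglyConnected

/-- A bridge: an undirected edge whose removal disconnects the underlying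
undirected multigraph. -/
def IsBridge (G : MixedMultigraph V) (e : G.E) : Prop :=
  ¬ G.directed e ∧ ¬ (G.deleteEdge e).Conn

/-- `G` has no bridges. -/
def Bridgeless (G : MixedMultigraph V) : Prop := ∀ e, ¬ G.IsBridge e

/-- `G` is 2-edge-connected: connected and without bridges. -/
def TwoEdgeConnected (G : MixedMultigraph V) : Prop := G.Conn ∧ G.Bridgeless

/-- The neighbours of `u`: all in-neighbours, out-neighbours and undirected
neighbours. -/
def neighborSet (G : MixedMultigraph V) (u : V) : Set V :=
  {v | ∃ e : G.E, G.ends e = (u, v) ∨ G.ends e = (v, u)}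

/-- The closed neighbourhood `N[u]`. -/
def closedNeighborSet (G : MixedMultigraph V) (u : V) : Set V :=
  insert u (G.neighborSet u)

/-- An orientation of `G`: each undirected edge receives exactly one direction
(`flip e = true` means the stored endpoint pair of `e` is reversed); directed
edges keep their direction. -/
structure Orientation (G : MixedMultigraph V) where
  flip : G.E → Bool
  flip_dir : ∀ e, G.directed e → flip e = false

/-- The (fully directed) mixed multigraph produced by an orientation. -/
def Orientation.graph {G : MixedMultigraph V} (σ : G.Orientation) :
    MixedMultigraph V :=
  ⟨G.E, fun e => if σ.flip e then (G.ends e).swap else G.ends e, fun _ => True⟩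

/-- A cycle: a closed walk of positive length with no repeated edges and no
repeated vertices except the common start/end vertex. -/
def IsCycle (G : MixedMultigraph V) {a : V} (w : G.Walk a a) : Prop :=
  0 < w.length ∧ w.edges.Nodup ∧ w.support.tail.Nodup

/-- `e` is an edge between `u` and `v`. -/
def EdgeBetween (G : MixedMultigraph V) (e : G.E) (u v : V) : Prop :=
  G.ends e = (u, v) ∨ G.ends e = (v, u)

/-- The length of a shortest cycle containing the edge `e`. -/
noncomputable def girthThrough (G : MixedMultigraph V) (e : G.E) : ℕ∞ :=
  sInf {n : ℕ∞ | ∃ (a : V) (w : G.Walk a a),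
    G.IsCycle w ∧ e ∈ w.edges ∧ (w.length : ℕ∞) = n}

/-- `l(v)`: the length of a shortest cycle containing an edge between `u` and
`v`. -/
noncomputable def cycLen (G : MixedMultigraph V) (u v : V) : ℕ∞ :=
  sInf {n : ℕ∞ | ∃ (a : V) (w : G.Walk a a) (e : G.E),
    G.IsCycle w ∧ e ∈ w.edges ∧ G.EdgeBetween e u v ∧ (w.length : ℕ∞) = n}

/-- The parameter `s = ∑_{v ∈ N(u)} l(v)`. -/
noncomputable def sParam (G : MixedMultigraph V) (u : V) : ℕ∞ :=
  ∑ᶠ v ∈ G.neighborSet u, G.cycLen u v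

/-- Orient the single edge `e₀`: give it the (tail, head) pair `d` and make it
directed, leaving all other edges unchanged. -/
noncomputable def orientOne (G : MixedMultigraph V) (e₀ : G.E) (d : V × V) :
    MixedMultigraph V :=
  ⟨G.E, fun e => if e = e₀ then d else G.ends e, fun e => e = e₀ ∨ G.directed e⟩

/-- A subgraph of `G`. -/
structure Subgraph (G : MixedMultigraph V) where
  verts : Set V
  edges : Set G.E
  fst_mem : ∀ e ∈ edges, (G.ends e).1 ∈ verts
  snd_mem : ∀ e ∈ edges, (G.ends e).2 ∈ verts

/-- A subgraph, regarded as a mixed multigraph on its own vertex set. -/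
def Subgraph.toGraph {G : MixedMultigraph V} (H : G.Subgraph) :
    MixedMultigraph H.verts :=
  ⟨H.edges,
   fun e => (⟨(G.ends e.1).1, H.fst_mem e.1 e.2⟩, ⟨(G.ends e.1).2, H.snd_mem e.1 e.2⟩),
   fun e => G.directed e.1⟩

end MixedMultigraph


namespace MixedMultigraph

variable {V : Type u} {G : MixedMultigraph V}

namespace Walk

/-- Concatenation of walks. -/
def append : ∀ {x y z : V}, G.Walk x y → G.Walk y z → G.Walk x z
  | _, _, _, nil _, w' => w'
  | _, _, _, cons e h w, w' => cons e h (w.append w')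

lemma length_append : ∀ {x y z : V} (w : G.Walk x y) (w' : G.Walk y z),
    (w.append w').length = w.length + w'.length
  | _, _, _, nil _, w' => by simp [append, length]
  | _, _, _, cons e h w, w' => by
      simp [append, length, length_append w w']; omega

lemma edges_append : ∀ {x y z : V} (w : G.Walk x y) (w' : G.Walk y z),
    (w.append w').edges = w.edges ++ w'.edges
  | _, _, _, nil _, w' => by simp [append, edges]
  | _, _, _, cons e h w, w' => by simp [append, edges, edges_append w w']

lemma start_mem_support : ∀ {x y : V} (w : G.Walk x y), x ∈ w.support
  | _, _, nil v => by simp [support]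
  | _, _, cons e h w => by simp [support]

lemma end_mem_support : ∀ {x y : V} (w : G.Walk x y), y ∈ w.support
  | _, _, nil v => by simp [support]
  | _, _, cons e h w => by simp [support, end_mem_support w]

lemma ends_mem_support : ∀ {x y : V} (w : G.Walk x y) (e : G.E), e ∈ w.edges →
    (G.ends e).1 ∈ w.support ∧ (G.ends e).2 ∈ w.support
  | _, _, nil v, e => by simp [edges]
  | x, _, cons f hf w, e => by
      intro he
      rcases List.mem_cons.mp (by simpa [edges] using he) with h | h
      · subst h
        simp only [support]
        rcases hf with h1 | ⟨_, h1⟩ <;> rw [h1] <;>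
          simp [List.mem_cons, start_mem_support]
      · have h2 := ends_mem_support w e h
        exact ⟨by simp [support, h2.1], by simp [support, h2.2]⟩

lemma exists_dropUntil : ∀ {x y : V} (w : G.Walk x y) (z : V), z ∈ w.support →
    ∃ w' : G.Walk z y, w'.length ≤ w.length ∧ (∀ e, e ∈ w'.edges → e ∈ w.edges) ∧
      w'.support <:+ w.support
  | _, _, nil v, z => by
      intro hz
      have hzv : z = v := by simpa [support] using hz
      subst hzv
      exact ⟨nil z, le_rfl, by simp, List.suffix_refl _⟩
  | x, y, cons f hf w, z => by
      intro hz
      by_cases hzx : z = x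
      · subst hzx
        exact ⟨cons f hf w, le_rfl, fun _ h => h, List.suffix_refl _⟩
      · have hz' : z ∈ w.support := by
          rcases List.mem_cons.mp (by simpa [support] using hz) with h | h
          · exact absurd h hzx
          · exact h
        obtain ⟨w', h1, h2, h3⟩ := exists_dropUntil w z hz'
        refine ⟨w', by simp [length]; omega, fun e he => ?_, h3.trans (List.suffix_cons _ _)⟩
        have := h2 e he
        simp [edges, this]

lemma exists_bypass : ∀ {x y : V} (w : G.Walk x y),
    ∃ w' : G.Walk x y, w'.support.Nodup ∧ w'.length ≤ w.length ∧
      ∀ e, e ∈ w'.edges → e ∈ w.edges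
  | _, _, nil v => ⟨nil v, by simp [support], le_rfl, by simp [edges]⟩
  | x, y, cons f hf w => by
      obtain ⟨w', hnd, hlen, hsub⟩ := exists_bypass w
      by_cases hx : x ∈ w'.support
      · obtain ⟨w'', h1, h2, h3⟩ := exists_dropUntil w' x hx
        refine ⟨w'', hnd.sublist h3.sublist, by simp [length]; omega, fun e he => ?_⟩
        have := hsub e (h2 e he)
        simp [edges, this]
      · refine ⟨cons f hf w', ?_, by simp [length]; omega, fun e he => ?_⟩
        · simpa [support, List.nodup_cons] using ⟨hx, hnd⟩
        · rcases List.mem_cons.mp (by simpa [edges] using he) with h | h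
          · simp [edges, h]
          · have := hsub e h
            simp [edges, this]

lemma edges_nodup_of_support_nodup : ∀ {x y : V} (w : G.Walk x y),
    w.support.Nodup → w.edges.Nodup
  | _, _, nil v => by simp [edges]
  | x, y, cons f hf w => by
      intro h
      have hx : x ∉ w.support := (List.nodup_cons.mp (by simpa [support] using h)).1
      have hnd : w.support.Nodup := (List.nodup_cons.mp (by simpa [support] using h)).2
      have hf' : f ∉ w.edges := fun hmem => by
        have h2 := ends_mem_support w f hmem
        rcases hf with h1 | ⟨_, h1⟩
        · rw [h1] at h2; exact hx h2.1
        · rw [h1] at h2; exact hx h2.2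
      simpa [edges, List.nodup_cons] using ⟨hf', edges_nodup_of_support_nodup w hnd⟩

lemma exists_cycle_through (e : G.E) {a b : V} (he : G.Traverses e a b)
    (w : G.Walk b a) (hew : e ∉ w.edges) :
    ∃ w' : G.Walk a a, G.IsCycle w' ∧ e ∈ w'.edges ∧ w'.length ≤ w.length + 1 := by
  obtain ⟨p, hnd, hlen, hsub⟩ := exists_bypass w
  refine ⟨Walk.cons e he p, ⟨?_, ?_, ?_⟩, ?_, ?_⟩
  · simp [length]
  · simpa [edges, List.nodup_cons] using
      ⟨fun h => hew (hsub e h), edges_nodup_of_support_nodup p hnd⟩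
  · simpa [support] using hnd
  · simp [edges]
  · simp [length]; omega

lemma first_edge : ∀ {a b : V} (w : G.Walk a b), w.support.Nodup → ∀ e : G.E, e ∈ w.edges →
    ((G.ends e).1 = a ∨ (G.ends e).2 = a) →
    ∃ (c : V) (h : G.Traverses e a c) (w' : G.Walk c b),
      e ∉ w'.edges ∧ w'.length + 1 = w.length
  | _, _, nil v => by simp [edges]
  | a, b, cons f hf w => by
      intro hnd e he ha
      have hxs : a ∉ w.support := (List.nodup_cons.mp (by simpa [support] using hnd)).1
      have hnotin : e ∉ w.edges := fun hmem => by
        have h2 := ends_mem_support w e hmem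
        rcases ha with h1 | h1
        · rw [h1] at h2; exact hxs h2.1
        · rw [h1] at h2; exact hxs h2.2
      rcases List.mem_cons.mp (by simpa [edges] using he) with h | h
      · subst h
        exact ⟨_, hf, w, hnotin, by simp [length]⟩
      · exact absurd h hnotin

lemma last_edge : ∀ {a b : V} (w : G.Walk a b), w.support.Nodup → ∀ e : G.E, e ∈ w.edges →
    ((G.ends e).1 = b ∨ (G.ends e).2 = b) →
    ∃ (c : V) (w' : G.Walk a c) (h : G.Traverses e c b),
      e ∉ w'.edges ∧ w'.length + 1 = w.length
  | _, _, nil v => by simp [edges]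
  | a, b, @Walk.cons _ _ _ p _ f hf w => by
      intro hnd e he hb
      have hxs : a ∉ w.support := (List.nodup_cons.mp (by simpa [support] using hnd)).1
      have hnd' : w.support.Nodup := (List.nodup_cons.mp (by simpa [support] using hnd)).2
      rcases List.mem_cons.mp (by simpa [edges] using he) with h | h
      · subst h
        have hba : b = a ∨ b = p := by
          rcases hf with h1 | ⟨_, h1⟩
          · rw [h1] at hb; exact hb.imp Eq.symm Eq.symm
          · rw [h1] at hb; exact Or.symm (hb.imp Eq.symm Eq.symm)
        rcases hba with hba | hbp
        · subst hba
          exact absurd (end_mem_support w) hxs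
        · subst hbp
          cases w with
          | nil =>
              exact ⟨a, Walk.nil a, hf, by simp [edges], by simp [length]⟩
          | cons g hg w₂ =>
              exact absurd (end_mem_support w₂)
                (List.nodup_cons.mp (by simpa [support] using hnd')).1
      · obtain ⟨c, w', hh, hne, hlw⟩ := last_edge w hnd' e h hb
        have hef : e ≠ f := fun hef => by
          subst hef
          have hmem := ends_mem_support w e h
          rcases hf with h1 | ⟨_, h1⟩
          · rw [h1] at hmem; exact hxs hmem.1
          · rw [h1] at hmem; exact hxs hmem.2
        refine ⟨c, Walk.cons f hf w', hh, ?_, by simp [length]; omega⟩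
        intro hmem
        rcases List.mem_cons.mp (by simpa [edges] using hmem) with h' | h'
        · exact hef h'
        · exact hne h'

end Walk

lemma exists_walk_of_edist_le {a b : V} {k : ℕ} (h : G.edist a b ≤ (k : ℕ∞)) :
    ∃ w : G.Walk a b, w.length ≤ k := by
  by_contra hc
  push_neg at hc
  have h2 : ((k + 1 : ℕ) : ℕ∞) ≤ G.edist a b := by
    refine le_sInf ?_
    rintro n ⟨w, rfl⟩
    have hlt : k + 1 ≤ w.length := hc w
    exact_mod_cast hlt
  have h4 : ((k + 1 : ℕ) : ℕ∞) ≤ ((k : ℕ) : ℕ∞) := h2.trans h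
  have h3 : k + 1 ≤ k := by exact_mod_cast h4
  omega

lemma traverses_from {e : G.E} {u v c : V} (huv : u ≠ v)
    (hends : G.ends e = (u, v) ∨ G.ends e = (v, u)) (h : G.Traverses e u c) : c = v := by
  rcases h with h1 | ⟨_, h1⟩ <;> rcases hends with h2 | h2 <;>
      rw [h2] at h1 <;> rw [Prod.mk.injEq] at h1
  · exact h1.2.symm
  · exact absurd h1.1.symm huv
  · exact absurd h1.2.symm huv
  · exact h1.1.symm

lemma traverses_to {e : G.E} {u v c : V} (huv : u ≠ v)
    (hends : G.ends e = (u, v) ∨ G.ends e = (v, u)) (h : G.Traverses e c u) : c = v := by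
  rcases h with h1 | ⟨_, h1⟩ <;> rcases hends with h2 | h2 <;>
      rw [h2] at h1 <;> rw [Prod.mk.injEq] at h1
  · exact absurd h1.2.symm huv
  · exact h1.1.symm
  · exact h1.2.symm
  · exact absurd h1.1.symm huv

lemma exists_crossing_edge (e₀ : G.E) (S : V → Prop) :
    ∀ {a b : V} (w : ((G.deleteEdge e₀).symmetrize).Walk a b), S a → ¬ S b →
      ∃ (p q : V) (g : G.E), g ≠ e₀ ∧ G.ends g = (p, q) ∧
        ((S p ∧ ¬ S q) ∨ (¬ S p ∧ S q))
  | _, _, .nil v => fun hS hnS => absurd hS hnS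
  | a, b, @Walk.cons _ _ _ c _ g' hg' w => fun hS hnS => by
      by_cases hc : S c
      · exact exists_crossing_edge e₀ S w hc hnS
      · rcases hg' with h1 | ⟨_, h1⟩
        · exact ⟨a, c, g'.1, g'.2, h1, Or.inl ⟨hS, hc⟩⟩
        · exact ⟨c, a, g'.1, g'.2, h1, Or.inr ⟨hc, hS⟩⟩

end MixedMultigraph

open MixedMultigraph in
/-- in a strongly connected bridgeless mixed multigraph, if
`u` has eccentricity at most `r`, then every neighbour `v` of `u` is such that
some cycle of length at most `2r + 1` contains an edge between `u` and `v`. -/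
theorem short_cycle_through_neighbor {V : Type} [Fintype V]
    (G : MixedMultigraph V) [Fintype G.E]
    (hsc : G.StronglyConnected) (hbl : G.Bridgeless)
    (r : ℕ) (hr : 0 < r) (u : V) (hu : G.ecc u ≤ (r : ℕ∞)) :
    ∀ v ∈ G.neighborSet u,
      ∃ (a : V) (w : G.Walk a a) (e : G.E),
        G.IsCycle w ∧ e ∈ w.edges ∧ G.EdgeBetween e u v ∧
        w.length ≤ 2 * r + 1 := by
  intro v hv
  obtain ⟨e₀, hends⟩ := hv
  by_cases huv : u = v
  · subst huv
    have hends' : G.ends e₀ = (u, u) := by rcases hends with h | h <;> exact h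
    refine ⟨u, .cons e₀ (Or.inl hends') (.nil u), e₀, ⟨?_, ?_, ?_⟩, ?_, ?_, ?_⟩
    · simp [Walk.length]
    · simp [Walk.edges]
    · simp [Walk.support]
    · simp [Walk.edges]
    · exact Or.inl hends'
    · simp [Walk.length]
  have hu' : (⨆ z, max (G.edist u z) (G.edist z u)) ≤ (r : ℕ∞) := hu
  have hdist : ∀ z, G.edist u z ≤ (r : ℕ∞) ∧ G.edist z u ≤ (r : ℕ∞) := fun z => by
    have h1 := le_trans (le_iSup (fun z => max (G.edist u z) (G.edist z u)) z) hu'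
    exact ⟨le_trans (le_max_left _ _) h1, le_trans (le_max_right _ _) h1⟩
  have hpath_from : ∀ z, ∃ w : G.Walk u z, w.support.Nodup ∧ w.length ≤ r := fun z => by
    obtain ⟨w, hw⟩ := exists_walk_of_edist_le (hdist z).1
    obtain ⟨w', hnd, hlen, _⟩ := Walk.exists_bypass w
    exact ⟨w', hnd, hlen.trans hw⟩
  have hpath_to : ∀ z, ∃ w : G.Walk z u, w.support.Nodup ∧ w.length ≤ r := fun z => by
    obtain ⟨w, hw⟩ := exists_walk_of_edist_le (hdist z).2
    obtain ⟨w', hnd, hlen, _⟩ := Walk.exists_bypass w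
    exact ⟨w', hnd, hlen.trans hw⟩
  have hEB : G.EdgeBetween e₀ u v := hends
  have ha0 : (G.ends e₀).1 = u ∨ (G.ends e₀).2 = u := by
    rcases hends with h | h <;> rw [h] <;> simp
  have GR1 : ∀ w : G.Walk v u, e₀ ∉ w.edges → w.length ≤ 2 * r → G.Traverses e₀ u v →
      ∃ (a : V) (w' : G.Walk a a) (e : G.E), G.IsCycle w' ∧ e ∈ w'.edges ∧
        G.EdgeBetween e u v ∧ w'.length ≤ 2 * r + 1 := by
    intro w hw hlen htr
    obtain ⟨w', hcyc, hmem, hl⟩ := Walk.exists_cycle_through e₀ htr w hw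
    exact ⟨u, w', e₀, hcyc, hmem, hEB, by omega⟩
  have GR2 : ∀ w : G.Walk u v, e₀ ∉ w.edges → w.length ≤ 2 * r → G.Traverses e₀ v u →
      ∃ (a : V) (w' : G.Walk a a) (e : G.E), G.IsCycle w' ∧ e ∈ w'.edges ∧
        G.EdgeBetween e u v ∧ w'.length ≤ 2 * r + 1 := by
    intro w hw hlen htr
    obtain ⟨w', hcyc, hmem, hl⟩ := Walk.exists_cycle_through e₀ htr w hw
    exact ⟨v, w', e₀, hcyc, hmem, hEB, by omega⟩
  by_cases hdir : G.directed e₀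
  · rcases hends with hE | hE
    · obtain ⟨p, hnd, hlen⟩ := hpath_to v
      have hne : e₀ ∉ p.edges := fun hmem => by
        obtain ⟨c, w', hh, _, _⟩ := Walk.last_edge p hnd e₀ hmem ha0
        rcases hh with h1 | ⟨hnd2, _⟩
        · rw [hE] at h1; rw [Prod.mk.injEq] at h1; exact huv h1.2.symm
        · exact hnd2 hdir
      exact GR1 p hne (by omega) (Or.inl hE)
    · obtain ⟨p, hnd, hlen⟩ := hpath_from v
      have hne : e₀ ∉ p.edges := fun hmem => by
        obtain ⟨c, hh, w', _, _⟩ := Walk.first_edge p hnd e₀ hmem ha0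
        rcases hh with h1 | ⟨hnd2, _⟩
        · rw [hE] at h1; rw [Prod.mk.injEq] at h1; exact huv h1.1.symm
        · exact hnd2 hdir
      exact GR2 p hne (by omega) (Or.inl hE)
  · have htuv : G.Traverses e₀ u v := by
      rcases hends with h | h
      · exact Or.inl h
      · exact Or.inr ⟨hdir, h⟩
    have htvu : G.Traverses e₀ v u := by
      rcases hends with h | h
      · exact Or.inr ⟨hdir, h⟩
      · exact Or.inl h
    have b1 : ∀ z, (∃ w : G.Walk u z, e₀ ∉ w.edges ∧ w.length ≤ r) ∨
        (∃ w : G.Walk v z, e₀ ∉ w.edges ∧ w.length + 1 ≤ r) := fun z => by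
      obtain ⟨p, hnd, hlen⟩ := hpath_from z
      by_cases hmem : e₀ ∈ p.edges
      · obtain ⟨c, hh, w', hne, hlw⟩ := Walk.first_edge p hnd e₀ hmem ha0
        have hc : c = v := traverses_from huv hends hh
        subst hc
        exact Or.inr ⟨w', hne, by omega⟩
      · exact Or.inl ⟨p, hmem, hlen⟩
    have b2 : ∀ z, (∃ w : G.Walk z u, e₀ ∉ w.edges ∧ w.length ≤ r) ∨
        (∃ w : G.Walk z v, e₀ ∉ w.edges ∧ w.length + 1 ≤ r) := fun z => by
      obtain ⟨p, hnd, hlen⟩ := hpath_to z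
      by_cases hmem : e₀ ∈ p.edges
      · obtain ⟨c, w', hh, hne, hlw⟩ := Walk.last_edge p hnd e₀ hmem ha0
        have hc : c = v := traverses_to huv hends hh
        subst hc
        exact Or.inr ⟨w', hne, by omega⟩
      · exact Or.inl ⟨p, hmem, hlen⟩
    by_cases hA : ∃ z, (∃ w : G.Walk v z, e₀ ∉ w.edges ∧ w.length + 1 ≤ r) ∧
        (∃ w : G.Walk z u, e₀ ∉ w.edges ∧ w.length ≤ r)
    · obtain ⟨z, ⟨w1, h1, l1⟩, ⟨w2, h2, l2⟩⟩ := hA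
      refine GR1 (w1.append w2) ?_ ?_ htuv
      · rw [Walk.edges_append]
        simp [List.mem_append, h1, h2]
      · rw [Walk.length_append]; omega
    by_cases hB : ∃ z, (∃ w : G.Walk u z, e₀ ∉ w.edges ∧ w.length ≤ r) ∧
        (∃ w : G.Walk z v, e₀ ∉ w.edges ∧ w.length + 1 ≤ r)
    · obtain ⟨z, ⟨w1, h1, l1⟩, ⟨w2, h2, l2⟩⟩ := hB
      refine GR2 (w1.append w2) ?_ ?_ htvu
      · rw [Walk.edges_append]
        simp [List.mem_append, h1, h2]
      · rw [Walk.length_append]; omega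
    have hpart : ∀ z, ((∃ w : G.Walk u z, e₀ ∉ w.edges ∧ w.length ≤ r) ∧
          (∃ w : G.Walk z u, e₀ ∉ w.edges ∧ w.length ≤ r)) ∨
        ((∃ w : G.Walk v z, e₀ ∉ w.edges ∧ w.length + 1 ≤ r) ∧
          (∃ w : G.Walk z v, e₀ ∉ w.edges ∧ w.length + 1 ≤ r)) := fun z => by
      rcases b1 z with hPo | hQo
      · rcases b2 z with hPi | hQi
        · exact Or.inl ⟨hPo, hPi⟩
        · exact absurd ⟨z, hPo, hQi⟩ hB
      · rcases b2 z with hPi | hQi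
        · exact absurd ⟨z, hQo, hPi⟩ hA
        · exact Or.inr ⟨hQo, hQi⟩
    by_cases hSv : (∃ w : G.Walk u v, e₀ ∉ w.edges ∧ w.length ≤ r) ∧
        (∃ w : G.Walk v u, e₀ ∉ w.edges ∧ w.length ≤ r)
    · obtain ⟨_, ⟨w, hw, hl⟩⟩ := hSv
      exact GR1 w hw (by omega) htuv
    have hConn : (G.deleteEdge e₀).Conn := by
      by_contra hnc
      exact hbl e₀ ⟨hdir, hnc⟩
    obtain ⟨wc⟩ := hConn u v
    have hSu : (∃ w : G.Walk u u, e₀ ∉ w.edges ∧ w.length ≤ r) ∧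
        (∃ w : G.Walk u u, e₀ ∉ w.edges ∧ w.length ≤ r) :=
      ⟨⟨.nil u, by simp [Walk.edges], by simp [Walk.length]⟩,
       ⟨.nil u, by simp [Walk.edges], by simp [Walk.length]⟩⟩
    obtain ⟨p, q, g, hge, hgends, hcross⟩ := exists_crossing_edge e₀
      (fun z => (∃ w : G.Walk u z, e₀ ∉ w.edges ∧ w.length ≤ r) ∧
        (∃ w : G.Walk z u, e₀ ∉ w.edges ∧ w.length ≤ r)) wc hSu hSv
    rcases hcross with ⟨hp, hq⟩ | ⟨hp, hq⟩
    · obtain ⟨⟨w1, h1, l1⟩, -⟩ := hp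
      obtain ⟨-, ⟨w2, h2, l2⟩⟩ := (hpart q).resolve_left hq
      refine GR2 (w1.append (.cons g (Or.inl hgends) w2)) ?_ ?_ htvu
      · rw [Walk.edges_append]
        intro hmem
        rcases List.mem_append.mp hmem with h | h
        · exact h1 h
        · rcases List.mem_cons.mp (by simpa [Walk.edges] using h) with h' | h'
          · exact hge h'.symm
          · exact h2 h'
      · rw [Walk.length_append]; simp [Walk.length]; omega
    · obtain ⟨⟨w1, h1, l1⟩, -⟩ := (hpart p).resolve_left hp
      obtain ⟨-, ⟨w2, h2, l2⟩⟩ := hq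
      refine GR1 (w1.append (.cons g (Or.inl hgends) w2)) ?_ ?_ htuv
      · rw [Walk.edges_append]
        intro hmem
        rcases List.mem_append.mp hmem with h | h
        · exact h1 h
        · rcases List.mem_cons.mp (by simpa [Walk.edges] using h) with h' | h'
          · exact hge h'.symm
          · exact h2 h'
      · rw [Walk.length_append]; simp [Walk.length]; omega
end

section
/- (Robbins.) A connected undirected graph G admits a strongly connected orientation if and only if G has no bridge. -/
open scoped Classical ENNReal

universe u

/-! Undirected (simple) graphs and their orientations. -/

/-- The eccentricity of a vertex of an undirected graph. -/
noncomputable def sgEcc {V : Type u} (G : SimpleGraph V) (u : V) : ℕ∞ :=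
  ⨆ v, G.edist u v

/-- The radius of an undirected graph. -/
noncomputable def sgRadius {V : Type u} (G : SimpleGraph V) : ℕ∞ :=
  ⨅ u, sgEcc G u

/-- The diameter of an undirected graph. -/
noncomputable def sgDiam {V : Type u} (G : SimpleGraph V) : ℕ∞ :=
  ⨆ u, sgEcc G u

/-- An orientation of a simple graph `G`: exactly one of the two directions is
chosen for each edge of `G`. -/
structure SGOrientation {V : Type u} (G : SimpleGraph V) where
  adj : V → V → Prop
  adj_sub : ∀ ⦃x y : V⦄, adj x y → G.Adj x y
  exactly_one : ∀ ⦃x y : V⦄, G.Adj x y → (adj x y ↔ ¬ adj y x)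

/-- The digraph produced by an orientation, as a (fully directed) mixed
multigraph, so that directed distances, eccentricities, radius and diameter
are available. -/
def SGOrientation.toMixed {V : Type u} {G : SimpleGraph V} (o : SGOrientation G) :
    MixedMultigraph V :=
  ⟨{p : V × V // o.adj p.1 p.2}, Subtype.val, fun _ => True⟩


/-!
If `s(x, y)` is a bridge, then every step of a directed walk from `x` to `y` other than the
arc `x → y` stays in the component of `x` in `G - s(x, y)`, so such a walk needs the arc
`x → y`; by symmetry a walk back needs `y → x`, and an orientation cannot contain both.

Conversely, grow a vertex set `S` together with a partial orientation whose arcs lie in `S`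
and which is strongly connected on `S`. An edge `ba` leaving `S` is not a bridge, so it closes
a trail from `b` back to `b`. Orienting along this ear every edge with an endpoint outside `S`
creates no conflict with the arcs inside `S`, and every new vertex reaches `S` and is reached
from `S`. Once `S` is everything, extend the partial orientation arbitrarily.
-/

open Relation

namespace SimpleGraph

variable {V : Type*} {G : SimpleGraph V}

theorem IsBridge.rel_of_reflTransGen {r : V → V → Prop} (hr : ∀ ⦃p q⦄, r p q → G.Adj p q)
    {x y : V} (hb : G.IsBridge s(x, y)) (hxy : ReflTransGen r x y) : r x y := by
  by_contra hn
  suffices ∀ z, ReflTransGen r x z → (G.deleteEdges {s(x, y)}).Reachable x z from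
    isBridge_iff.mp hb (this y hxy)
  intro z hz
  induction hz with
  | refl => rfl
  | @tail p q _ hpq ih =>
    by_cases he : s(p, q) = s(x, y)
    · rcases Sym2.eq_iff.mp he with ⟨rfl, rfl⟩ | ⟨rfl, rfl⟩
      · exact absurd hpq hn
      · exact absurd ih hb
    · exact ih.trans (Adj.reachable (by simp [hr hpq, he]))

theorem Walk.IsTrail.symm_notMem_darts {u v : V} {p : G.Walk u v} (hp : p.IsTrail)
    {d : G.Dart} (hd : d ∈ p.darts) : d.symm ∉ p.darts := fun hd' =>
  d.symm_ne (List.inj_on_of_nodup_map hp.edges_nodup hd' hd d.edge_symm)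

namespace Walk

variable {r : V → V → Prop} {S : Set V}

theorem exists_reflTransGen_to_of_end_mem {u v : V} (p : G.Walk u v) (hv : v ∈ S)
    (hr : ∀ d ∈ p.darts, d.fst ∉ S → r d.fst d.snd) :
    ∀ x ∈ p.support, ∃ s ∈ S, ReflTransGen r x s := by
  induction p with
  | nil => intro x hx; exact ⟨x, by simp_all, .refl⟩
  | @cons u w _ huw p ih =>
    intro x hx
    have ih := ih hv fun d hd => hr d (by simp [hd])
    rcases List.mem_cons.mp (support_cons huw p ▸ hx) with rfl | hx
    · by_cases hxS : x ∈ S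
      · exact ⟨x, hxS, .refl⟩
      · obtain ⟨s, hs, hws⟩ := ih w p.start_mem_support
        exact ⟨s, hs, .head (hr ⟨(x, w), huw⟩ (by simp) hxS) hws⟩
    · exact ih x hx

theorem exists_reflTransGen_from_of_start_mem {u v : V} (p : G.Walk u v) (hu : u ∈ S)
    (hr : ∀ d ∈ p.darts, d.snd ∉ S → r d.fst d.snd) :
    ∀ x ∈ p.support, ∃ s ∈ S, ReflTransGen r s x := by
  intro x hx
  obtain ⟨s, hs, hxs⟩ := p.reverse.exists_reflTransGen_to_of_end_mem (r := Function.swap r) hu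
    (fun d hd hdS => hr d.symm (by simpa [darts_reverse] using hd) hdS) x (by simpa using hx)
  exact ⟨s, hs, reflTransGen_swap.mp hxs⟩

end Walk

structure IsStrongPartialOrientationOn (G : SimpleGraph V) (S : Set V) (A : V → V → Prop) :
    Prop where
  adj : ∀ ⦃x y⦄, A x y → G.Adj x y
  asymm : ∀ ⦃x y⦄, A x y → ¬ A y x
  mem : ∀ ⦃x y⦄, A x y → x ∈ S ∧ y ∈ S
  reachable : ∀ x ∈ S, ∀ y ∈ S, ReflTransGen A x y

namespace IsStrongPartialOrientationOn

variable {S : Set V} {A : V → V → Prop}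

theorem singleton (v : V) : G.IsStrongPartialOrientationOn {v} (fun _ _ => False) where
  adj := by simp
  asymm := by simp
  mem := by simp
  reachable := by rintro x rfl y rfl; rfl

theorem union_support_of_isTrail (h : G.IsStrongPartialOrientationOn S A) {u v : V}
    (e : G.Walk u v) (he : e.IsTrail) (hu : u ∈ S) (hv : v ∈ S) :
    ∃ A', G.IsStrongPartialOrientationOn (S ∪ {x | x ∈ e.support}) A' := by
  let ear x y := ∃ d ∈ e.darts, d.toProd = (x, y) ∧ (x ∉ S ∨ y ∉ S)
  have ear_not_mem {x y} (hxy : ear x y) (hx : x ∈ S) (hy : y ∈ S) : False := by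
    obtain ⟨-, -, -, h⟩ := hxy
    tauto
  let A' x y := A x y ∨ ear x y
  refine ⟨A', ⟨?_, ?_, ?_, ?_⟩⟩
  · rintro x y (hxy | ⟨d, -, hd, -⟩)
    · exact h.adj hxy
    · obtain ⟨rfl, rfl⟩ := Prod.ext_iff.mp hd
      exact d.adj
  · rintro x y (hxy | hxy) (hyx | hyx)
    · exact h.asymm hxy hyx
    · exact ear_not_mem hyx (h.mem hxy).2 (h.mem hxy).1
    · exact ear_not_mem hxy (h.mem hyx).2 (h.mem hyx).1
    · obtain ⟨d, hd, hdxy, -⟩ := hxy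
      obtain ⟨d', hd', hdyx, -⟩ := hyx
      have : d' = d.symm := Dart.ext _ _ (by rw [hdyx, Dart.symm_toProd, hdxy]; rfl)
      exact he.symm_notMem_darts hd (this ▸ hd')
  · rintro x y (hxy | ⟨d, hd, hdxy, -⟩)
    · exact ⟨.inl (h.mem hxy).1, .inl (h.mem hxy).2⟩
    · obtain ⟨rfl, rfl⟩ := Prod.ext_iff.mp hdxy
      exact ⟨.inr (e.dart_fst_mem_support_of_mem_darts hd),
        .inr (e.dart_snd_mem_support_of_mem_darts hd)⟩
  · have to_S : ∀ x ∈ S ∪ {x | x ∈ e.support}, ∃ s ∈ S, ReflTransGen A' x s := by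
      rintro x (hx | hx)
      · exact ⟨x, hx, .refl⟩
      · exact e.exists_reflTransGen_to_of_end_mem hv
          (fun d hd hdS => .inr ⟨d, hd, rfl, .inl hdS⟩) x hx
    have from_S : ∀ y ∈ S ∪ {x | x ∈ e.support}, ∃ s ∈ S, ReflTransGen A' s y := by
      rintro y (hy | hy)
      · exact ⟨y, hy, .refl⟩
      · exact e.exists_reflTransGen_from_of_start_mem hu
          (fun d hd hdS => .inr ⟨d, hd, rfl, .inr hdS⟩) y hy
    intro x hx y hy
    obtain ⟨s, hs, hxs⟩ := to_S x hx
    obtain ⟨t, ht, hty⟩ := from_S y hy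
    have hst : ReflTransGen A' s t :=
      ReflTransGen.mono (fun _ _ => Or.inl) _ _ (h.reachable s hs t ht)
    exact hxs.trans (hst.trans hty)

end IsStrongPartialOrientationOn

theorem exists_isStrongPartialOrientationOn_univ [Finite V] (hconn : G.Connected)
    (hbl : ∀ e ∈ G.edgeSet, ¬ G.IsBridge e) :
    ∃ A, G.IsStrongPartialOrientationOn Set.univ A := by
  obtain ⟨v⟩ := hconn.nonempty
  obtain ⟨S, ⟨hvS, A, hA⟩, hmax⟩ :=
    (Set.toFinite {S : Set V | v ∈ S ∧ ∃ A, G.IsStrongPartialOrientationOn S A}).exists_maximal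
      ⟨{v}, rfl, _, .singleton v⟩
  suffices S = Set.univ from ⟨A, this ▸ hA⟩
  refine Set.eq_univ_of_forall fun x => ?_
  by_contra hxS
  obtain ⟨⟨⟨b, a⟩, hba⟩, -, hb, ha⟩ :=
    (hconn.preconnected v x).some.exists_boundary_dart S hvS hxS
  obtain ⟨p, hp⟩ := reachable_deleteEdges_iff_exists_walk.mp
    (not_not.mp (hbl _ (G.mem_edgeSet.mpr hba)))
  have hear : (Walk.cons hba p.bypass.reverse).IsTrail := by
    rw [Walk.isTrail_cons, Walk.reverse_isTrail_iff, Walk.edges_reverse, List.mem_reverse]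
    exact ⟨p.bypass_isPath.isTrail, fun h => hp (p.edges_bypass_subset_edges h)⟩
  obtain ⟨A', hA'⟩ := hA.union_support_of_isTrail _ hear hb hb
  exact ha (hmax ⟨Or.inl hvS, A', hA'⟩ Set.subset_union_left (.inr (by simp)))

end SimpleGraph

open SimpleGraph

theorem SGOrientation.exists_le_adj {V : Type*} {G : SimpleGraph V} {A : V → V → Prop}
    (hadj : ∀ ⦃x y⦄, A x y → G.Adj x y) (hasymm : ∀ ⦃x y⦄, A x y → ¬ A y x) :
    ∃ o : SGOrientation G, A ≤ o.adj := by
  let r := @WellOrderingRel V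
  refine ⟨⟨fun x y => A x y ∨ (G.Adj x y ∧ ¬ A y x ∧ r x y), ?_, ?_⟩, fun _ _ => Or.inl⟩
  · rintro x y (h | h)
    exacts [hadj h, h.1]
  · intro x y hxy
    have := trichotomous_of r x y
    have := asymm_of r (a := x) (b := y)
    have := hxy.ne
    have := @hasymm x y
    tauto

theorem SGOrientation.nonempty_walk_toMixed_iff {V : Type*} {G : SimpleGraph V}
    (o : SGOrientation G) {x y : V} : Nonempty (o.toMixed.Walk x y) ↔ ReflTransGen o.adj x y := by
  constructor
  · rintro ⟨w⟩
    induction w with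
    | nil => rfl
    | cons e h _ ih =>
      rcases h with h | ⟨h, -⟩
      · have he : e.1 = (_, _) := h
        have hadj := e.2
        rw [he] at hadj
        exact .head hadj ih
      · exact absurd trivial h
  · intro h
    induction h using ReflTransGen.head_induction_on with
    | refl => exact ⟨.nil y⟩
    | head hxz _ ih => exact ⟨.cons ⟨_, hxz⟩ (.inl rfl) ih.some⟩

theorem SGOrientation.stronglyConnected_toMixed_iff {V : Type*} {G : SimpleGraph V}
    (o : SGOrientation G) : o.toMixed.StronglyConnected ↔ ∀ x y, ReflTransGen o.adj x y :=
  forall₂_congr fun _ _ => o.nonempty_walk_toMixed_iff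

/-- Robbins: a connected undirected graph admits a strongly
connected orientation if and only if it has no bridge. -/
theorem robbins {V : Type} [Fintype V] (G : SimpleGraph V)
    (hconn : G.Connected) :
    (∃ o : SGOrientation G, o.toMixed.StronglyConnected) ↔
      ∀ e ∈ G.edgeSet, ¬ G.IsBridge e := by
  simp only [SGOrientation.stronglyConnected_toMixed_iff]
  constructor
  · rintro ⟨o, ho⟩ ⟨x, y⟩ hxy hbr
    have hyx : G.IsBridge s(y, x) := Sym2.eq_swap ▸ hbr
    exact (o.exactly_one hxy).mp (hbr.rel_of_reflTransGen o.adj_sub (ho x y))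
      (hyx.rel_of_reflTransGen o.adj_sub (ho y x))
  · intro hbl
    obtain ⟨A, hA⟩ := exists_isStrongPartialOrientationOn_univ hconn hbl
    obtain ⟨o, hAo⟩ := SGOrientation.exists_le_adj hA.adj hA.asymm
    exact ⟨o, fun x y => ReflTransGen.mono hAo _ _ (hA.reachable x trivial y trivial)⟩
end
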